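/- Let A be an abelian category and let D be a full subcategory of A closed under kernels and cokernels of morphisms between its objects. Set D_0 = D and, for n ≥ 1, let D_n be the full subcategory of objects admitting a short exact sequence 0 → M' → M → M'' → 0 with M', M'' ∈ D_{n−1}. Then E = ⋃_{n≥0} D_n is the wide subcategory of A generated by D: E is a wide subcategory, and any wide subcategory of A containing D contains E. -/

import Mathlib

open CategoryTheory CategoryTheory.Limits

universe v u

/-- A full subcategory (given as a set of objects) of an abelian category is closed
under kernels and cokernels if it is closed under isomorphisms and, for every morphism
between objects of it, the kernel and the cokernel of that morphism belong to it. -/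
structure ClosedUnderKerCoker {A : Type u} [Category.{v} A] [Abelian A] (D : Set A) :
    Prop where
  mem_of_iso : ∀ {X Y : A}, (X ≅ Y) → X ∈ D → Y ∈ D
  kernel_mem : ∀ {X Y : A} (f : X ⟶ Y), X ∈ D → Y ∈ D → kernel f ∈ D
  cokernel_mem : ∀ {X Y : A} (f : X ⟶ Y), X ∈ D → Y ∈ D → cokernel f ∈ D

/-- The full subcategory of extensions of `D`: objects `N` admitting a short exact
sequence `0 → N' → N → N'' → 0` with `N', N'' ∈ D`. -/
def extSet {A : Type u} [Category.{v} A] [Abelian A] (D : Set A) : Set A :=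
  {N | ∃ (N' N'' : A) (i : N' ⟶ N) (p : N ⟶ N'') (w : i ≫ p = 0),
    (CategoryTheory.ShortComplex.mk i p w).ShortExact ∧ N' ∈ D ∧ N'' ∈ D}

/-- A full subcategory of an abelian category is *wide* if it is closed under
isomorphisms, kernels, cokernels and extensions. -/
structure IsWideSubcategory {A : Type u} [Category.{v} A] [Abelian A] (C : Set A) :
    Prop where
  mem_of_iso : ∀ {X Y : A}, (X ≅ Y) → X ∈ C → Y ∈ C
  kernel_mem : ∀ {X Y : A} (f : X ⟶ Y), X ∈ C → Y ∈ C → kernel f ∈ C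
  cokernel_mem : ∀ {X Y : A} (f : X ⟶ Y), X ∈ C → Y ∈ C → cokernel f ∈ C
  extension_mem : ∀ (S : CategoryTheory.ShortComplex A), S.ShortExact →
    S.X₁ ∈ C → S.X₃ ∈ C → S.X₂ ∈ C

/-- The iterated extension subcategories: `D₀ = D` and `Dₙ₊₁` consists of the
extensions of objects of `Dₙ`. -/
def extIter {A : Type u} [Category.{v} A] [Abelian A] (D : Set A) : ℕ → Set A
  | 0 => D
  | n + 1 => extSet (extIter D n)

section Reductions
open CategoryTheory.Abelian CategoryTheory.Abelian.Pseudoelement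
attribute [local instance] CategoryTheory.Abelian.Pseudoelement.objectToSort
attribute [local instance] CategoryTheory.Abelian.Pseudoelement.homToFun

variable {A : Type u} [Category.{v} A] [Abelian A]

lemma exact_kernelComplex {M N : A} (f : M ⟶ N) :
    (ShortComplex.mk (kernel.ι f) f (kernel.condition f)).Exact :=
  ShortComplex.exact_of_f_is_kernel _ (kernelIsKernel f)

lemma exact_cokernelComplex {M N : A} (f : M ⟶ N) :
    (ShortComplex.mk f (cokernel.π f) (cokernel.condition f)).Exact :=
  ShortComplex.exact_of_g_is_cokernel _ (cokernelIsCokernel f)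

lemma target_red {N₁ N₂ N₃ M : A} {i : N₁ ⟶ N₂} {p : N₂ ⟶ N₃} {w : i ≫ p = 0}
    (hS : (ShortComplex.mk i p w).ShortExact) (f : M ⟶ N₂) :
    ∃ (u : kernel (f ≫ p) ⟶ N₁),
      Nonempty (kernel f ≅ kernel u) ∧
      ∃ (α : cokernel u ⟶ cokernel f) (β : cokernel f ⟶ cokernel (f ≫ p))
        (wab : α ≫ β = 0), (ShortComplex.mk α β wab).ShortExact := by
  haveI : Mono i := hS.mono_f
  haveI : Epi p := hS.epi_g
  obtain ⟨u, hu⟩ := KernelFork.IsLimit.lift' hS.exact.fIsKernel (kernel.ι (f ≫ p) ≫ f)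
    (by rw [Category.assoc, kernel.condition])
  rw [Fork.ι_ofι] at hu
  -- hu : u ≫ i = kernel.ι (f ≫ p) ≫ f
  refine ⟨u, ⟨?_⟩, ?_⟩
  · -- kernel f ≅ kernel u
    have hv : kernel.ι f ≫ f ≫ p = 0 := by rw [← Category.assoc, kernel.condition, zero_comp]
    set v : kernel f ⟶ kernel (f ≫ p) := kernel.lift (f ≫ p) (kernel.ι f) hv with hvdef
    have hvu : v ≫ u = 0 := by
      rw [← cancel_mono i, Category.assoc, hu, zero_comp, ← Category.assoc,
        hvdef, kernel.lift_ι, kernel.condition]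
    refine ⟨kernel.lift u v hvu,
        kernel.lift f (kernel.ι u ≫ kernel.ι (f ≫ p)) ?_, ?_, ?_⟩
    · have : kernel.ι u ≫ u ≫ i = 0 := by rw [← Category.assoc, kernel.condition, zero_comp]
      rw [hu] at this
      simpa using this
    · rw [← cancel_mono (kernel.ι f)]
      simp [hvdef]
    · rw [← cancel_mono (kernel.ι u), ← cancel_mono (kernel.ι (f ≫ p))]
      simp [hvdef]
  · have hu' : u ≫ i = kernel.ι (f ≫ p) ≫ f := hu
    have hui : u ≫ i ≫ cokernel.π f = 0 := by
      rw [← Category.assoc, hu', Category.assoc, cokernel.condition, comp_zero]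
    have hfp : f ≫ p ≫ cokernel.π (f ≫ p) = 0 := by
      rw [← Category.assoc, cokernel.condition]
    set α : cokernel u ⟶ cokernel f := cokernel.desc u (i ≫ cokernel.π f) hui with hα
    set β : cokernel f ⟶ cokernel (f ≫ p) := cokernel.desc f (p ≫ cokernel.π (f ≫ p)) hfp
      with hβ
    have hπα : cokernel.π u ≫ α = i ≫ cokernel.π f := cokernel.π_desc _ _ _
    have hπβ : cokernel.π f ≫ β = p ≫ cokernel.π (f ≫ p) := cokernel.π_desc _ _ _
    have wab : α ≫ β = 0 := by
      rw [← cancel_epi (cokernel.π u), comp_zero, ← Category.assoc, hπα, Category.assoc, hπβ]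
      rw [← Category.assoc, w, zero_comp]
    have pex_bot : ∀ b, p b = 0 → ∃ a, i a = b := pseudo_exact_of_exact hS.exact
    have pex_cof : ∀ b, (cokernel.π f) b = 0 → ∃ a, f a = b :=
      pseudo_exact_of_exact (exact_cokernelComplex f)
    have pex_cofp : ∀ b, (cokernel.π (f ≫ p)) b = 0 → ∃ a, (f ≫ p) a = b :=
      pseudo_exact_of_exact (exact_cokernelComplex (f ≫ p))
    have pex_ker : ∀ b, (f ≫ p) b = 0 → ∃ a, (kernel.ι (f ≫ p)) a = b :=
      pseudo_exact_of_exact (exact_kernelComplex (f ≫ p))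
    haveI hmono : Mono α := by
      apply mono_of_zero_of_map_zero
      intro x hx
      obtain ⟨y, hy⟩ := pseudo_surjective_of_epi (cokernel.π u) x
      have h1 : (cokernel.π f) ((i : N₁ ⟶ N₂) y) = 0 := by
        rw [← Pseudoelement.comp_apply, ← hπα, Pseudoelement.comp_apply, hy, hx]
      obtain ⟨m, hm⟩ := pex_cof _ h1
      have h2 : (f ≫ p) m = 0 := by
        rw [Pseudoelement.comp_apply, hm, ← Pseudoelement.comp_apply, w, Pseudoelement.zero_apply]
      obtain ⟨z, hz⟩ := pex_ker _ h2
      have h3 : (i : N₁ ⟶ N₂) ((u : kernel (f ≫ p) ⟶ N₁) z) = (i : N₁ ⟶ N₂) y := by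
        rw [← Pseudoelement.comp_apply, hu', Pseudoelement.comp_apply, hz, hm]
      have h4 : (u : kernel (f ≫ p) ⟶ N₁) z = y := pseudo_injective_of_mono i h3
      rw [← hy, ← h4, ← Pseudoelement.comp_apply, cokernel.condition, Pseudoelement.zero_apply]
    haveI hepi0 : Epi (p ≫ cokernel.π (f ≫ p)) := epi_comp _ _
    haveI hepi : Epi β := epi_of_epi_fac hπβ
    have hexact : (ShortComplex.mk α β wab).Exact := by
      apply exact_of_pseudo_exact
      intro b hb
      obtain ⟨n, hn⟩ := pseudo_surjective_of_epi (cokernel.π f) b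
      have h1 : (cokernel.π (f ≫ p)) ((p : N₂ ⟶ N₃) n) = 0 := by
        rw [← Pseudoelement.comp_apply, ← hπβ, Pseudoelement.comp_apply, hn]
        exact hb
      obtain ⟨m, hm⟩ := pex_cofp _ h1
      rw [Pseudoelement.comp_apply] at hm
      have hm' : (p : N₂ ⟶ N₃) n = (p : N₂ ⟶ N₃) ((f : M ⟶ N₂) m) := hm.symm
      obtain ⟨d, hd0, hd⟩ := sub_of_eq_image p _ _ hm'
      have hfm : (cokernel.π f) ((f : M ⟶ N₂) m) = 0 := by
        rw [← Pseudoelement.comp_apply, cokernel.condition, Pseudoelement.zero_apply]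
      have hdn : (cokernel.π f) d = (cokernel.π f) n := hd _ (cokernel.π f) hfm
      obtain ⟨y, hy⟩ := pex_bot d hd0
      refine ⟨(cokernel.π u) y, ?_⟩
      rw [← Pseudoelement.comp_apply, hπα, Pseudoelement.comp_apply, hy, hdn, hn]
    exact ⟨α, β, wab, ShortComplex.ShortExact.mk' hexact hmono hepi⟩

lemma source_red {M₁ M₂ M₃ N : A} {i : M₁ ⟶ M₂} {p : M₂ ⟶ M₃} {w : i ≫ p = 0}
    (hS : (ShortComplex.mk i p w).ShortExact) (f : M₂ ⟶ N) :
    ∃ (v : M₃ ⟶ cokernel (i ≫ f)),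
      Nonempty (cokernel f ≅ cokernel v) ∧
      ∃ (σ : kernel (i ≫ f) ⟶ kernel f) (τ : kernel f ⟶ kernel v)
        (wst : σ ≫ τ = 0), (ShortComplex.mk σ τ wst).ShortExact := by
  haveI : Mono i := hS.mono_f
  haveI : Epi p := hS.epi_g
  obtain ⟨v, hv⟩ := CokernelCofork.IsColimit.desc' hS.exact.gIsCokernel
    (f ≫ cokernel.π (i ≫ f)) (by rw [← Category.assoc, cokernel.condition])
  have hv' : p ≫ v = f ≫ cokernel.π (i ≫ f) := hv
  refine ⟨v, ⟨?_⟩, ?_⟩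
  · -- cokernel f ≅ cokernel v
    have hfv : f ≫ cokernel.π (i ≫ f) ≫ cokernel.π v = 0 := by
      rw [← Category.assoc, ← hv', Category.assoc, cokernel.condition, comp_zero]
    have hb' : (i ≫ f) ≫ cokernel.π f = 0 := by
      rw [Category.assoc, cokernel.condition, comp_zero]
    have hvb : v ≫ cokernel.desc (i ≫ f) (cokernel.π f) hb' = 0 := by
      rw [← cancel_epi p, comp_zero, ← Category.assoc, hv', Category.assoc,
        cokernel.π_desc, cokernel.condition]
    refine ⟨cokernel.desc f (cokernel.π (i ≫ f) ≫ cokernel.π v) hfv,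
      cokernel.desc v (cokernel.desc (i ≫ f) (cokernel.π f) hb') hvb, ?_, ?_⟩
    · rw [← cancel_epi (cokernel.π f)]
      simp
    · rw [← cancel_epi (cokernel.π v), ← cancel_epi (cokernel.π (i ≫ f))]
      simp
  · have hσc : (kernel.ι (i ≫ f) ≫ i) ≫ f = 0 := by rw [Category.assoc, kernel.condition]
    have hτc : (kernel.ι f ≫ p) ≫ v = 0 := by
      rw [Category.assoc, hv', ← Category.assoc, kernel.condition, zero_comp]
    set σ : kernel (i ≫ f) ⟶ kernel f := kernel.lift f (kernel.ι (i ≫ f) ≫ i) hσc with hσ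
    set τ : kernel f ⟶ kernel v := kernel.lift v (kernel.ι f ≫ p) hτc with hτ
    have hσι : σ ≫ kernel.ι f = kernel.ι (i ≫ f) ≫ i := kernel.lift_ι _ _ _
    have hτι : τ ≫ kernel.ι v = kernel.ι f ≫ p := kernel.lift_ι _ _ _
    have wst : σ ≫ τ = 0 := by
      rw [← cancel_mono (kernel.ι v), zero_comp, Category.assoc, hτι, ← Category.assoc,
        hσι, Category.assoc, w, comp_zero]
    have pex_bot : ∀ b, p b = 0 → ∃ a, i a = b := pseudo_exact_of_exact hS.exact
    have pex_kf : ∀ b, f b = 0 → ∃ a, (kernel.ι f) a = b :=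
      pseudo_exact_of_exact (exact_kernelComplex f)
    have pex_kif : ∀ b, (i ≫ f) b = 0 → ∃ a, (kernel.ι (i ≫ f)) a = b :=
      pseudo_exact_of_exact (exact_kernelComplex (i ≫ f))
    have pex_cif : ∀ b, (cokernel.π (i ≫ f)) b = 0 → ∃ a, (i ≫ f) a = b :=
      pseudo_exact_of_exact (exact_cokernelComplex (i ≫ f))
    haveI hmono0 : Mono (kernel.ι (i ≫ f) ≫ i) := mono_comp _ _
    haveI hmono : Mono σ := mono_of_mono_fac hσι
    haveI hepi : Epi τ := by
      apply epi_of_pseudo_surjective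
      intro y
      obtain ⟨m, hm⟩ := pseudo_surjective_of_epi p ((kernel.ι v) y)
      have h1 : (cokernel.π (i ≫ f)) ((f : M₂ ⟶ N) m) = 0 := by
        rw [← Pseudoelement.comp_apply, ← hv', Pseudoelement.comp_apply, hm,
          ← Pseudoelement.comp_apply, kernel.condition, Pseudoelement.zero_apply]
      obtain ⟨z, hz⟩ := pex_cif _ h1
      rw [Pseudoelement.comp_apply] at hz
      obtain ⟨d, hd0, hd⟩ := sub_of_eq_image f _ _ hz.symm
      have hpz : (p : M₂ ⟶ M₃) ((i : M₁ ⟶ M₂) z) = 0 := by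
        rw [← Pseudoelement.comp_apply, w, Pseudoelement.zero_apply]
      have hdp : (p : M₂ ⟶ M₃) d = (p : M₂ ⟶ M₃) m := hd _ p hpz
      obtain ⟨e, he⟩ := pex_kf d hd0
      refine ⟨e, pseudo_injective_of_mono (kernel.ι v) ?_⟩
      rw [← Pseudoelement.comp_apply, hτι, Pseudoelement.comp_apply, he, hdp, hm]
    have hexact : (ShortComplex.mk σ τ wst).Exact := by
      apply exact_of_pseudo_exact
      intro b hb
      have h1 : (p : M₂ ⟶ M₃) ((kernel.ι f) b) = 0 := by
        rw [← Pseudoelement.comp_apply, ← hτι, Pseudoelement.comp_apply]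
        erw [hb]
        rw [apply_zero]
      obtain ⟨a, ha⟩ := pex_bot _ h1
      have h2 : (i ≫ f) a = 0 := by
        rw [Pseudoelement.comp_apply, ha, ← Pseudoelement.comp_apply, kernel.condition,
          Pseudoelement.zero_apply]
      obtain ⟨z, hz⟩ := pex_kif _ h2
      refine ⟨z, pseudo_injective_of_mono (kernel.ι f) ?_⟩
      rw [← Pseudoelement.comp_apply, hσι, Pseudoelement.comp_apply, hz, ha]
    exact ⟨σ, τ, wst, ShortComplex.ShortExact.mk' hexact hmono hepi⟩

end Reductions

section Infra
open ZeroObject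
variable {A : Type u} [Category.{v} A] [Abelian A]

lemma extIter_isoClosed {D : Set A} (hD : ∀ {X Y : A}, (X ≅ Y) → X ∈ D → Y ∈ D) :
    ∀ (n : ℕ) {X Y : A}, (X ≅ Y) → X ∈ extIter D n → Y ∈ extIter D n := by
  intro n
  induction n with
  | zero => exact fun e h => hD e h
  | succ n ih =>
    rintro X Y e ⟨N', N'', i, p, w, hse, h1, h2⟩
    refine ⟨N', N'', i ≫ e.hom, e.inv ≫ p, ?_, ?_, h1, h2⟩
    · rw [Category.assoc, e.hom_inv_id_assoc, w]
    · exact ShortComplex.shortExact_of_iso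
        (ShortComplex.isoMk (S₁ := ShortComplex.mk i p w) (Iso.refl N') e (Iso.refl N'')
          (by simp) (by simp)) hse

lemma mem_extSet_of_mem {S : Set A} (h0 : (0 : A) ∈ S) {X : A} (hX : X ∈ S) :
    X ∈ extSet S := by
  refine ⟨X, 0, 𝟙 X, 0, by simp, ?_, hX, h0⟩
  have hex : (ShortComplex.mk (𝟙 X) (0 : X ⟶ (0 : A)) (by simp)).Exact := by
    rw [ShortComplex.exact_iff_epi _ rfl]
    infer_instance
  exact ShortComplex.ShortExact.mk' hex inferInstance
    ⟨fun g h _ => (isZero_zero A).eq_of_src g h⟩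

lemma zero_mem_extIter {D : Set A} (h0 : (0 : A) ∈ D) : ∀ n, (0 : A) ∈ extIter D n := by
  intro n
  induction n with
  | zero => exact h0
  | succ n ih => exact mem_extSet_of_mem ih ih

lemma extIter_mono {D : Set A} (h0 : (0 : A) ∈ D) {a b : ℕ} (h : a ≤ b) :
    extIter D a ⊆ extIter D b := by
  induction b with
  | zero => rw [Nat.le_zero.mp h]
  | succ b ih =>
    rcases Nat.lt_or_ge a (b + 1) with h' | h'
    · exact fun X hX => mem_extSet_of_mem (zero_mem_extIter h0 b)
        (ih (Nat.lt_succ_iff.mp h') hX)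
    · rw [Nat.le_antisymm h h']

lemma measure_lt {m' n' m n : ℕ} (hmax : max m' n' ≤ max m n)
    (h : max m' n' < max m n ∨ m' + n' < m + n) :
    3 ^ max m' n' + m' + n' < 3 ^ max m n + m + n := by
  rcases h with h | h
  · have h1 : max m' n' < 3 ^ max m' n' := Nat.lt_pow_self (by norm_num)
    have h2 : 3 ^ (max m' n' + 1) ≤ 3 ^ max m n := Nat.pow_le_pow_right (by norm_num) h
    have h3 : 3 ^ (max m' n' + 1) = 3 ^ max m' n' * 3 := pow_succ 3 _
    have hm' : m' ≤ max m' n' := le_max_left _ _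
    have hn' : n' ≤ max m' n' := le_max_right _ _
    omega
  · have := Nat.pow_le_pow_right (by norm_num : 1 ≤ 3) hmax
    omega

lemma meas_le {m' n' m n t : ℕ} (hmax : max m' n' ≤ max m n)
    (h : max m' n' < max m n ∨ m' + n' < m + n)
    (ht : 3 ^ max m n + m + n ≤ t + 1) : 3 ^ max m' n' + m' + n' ≤ t := by
  have := measure_lt hmax h; omega

end Infra


section MainInduction
open ZeroObject
variable {A : Type u} [Category.{v} A] [Abelian A]

lemma kerCoker_mem {D : Set A} (hD : ClosedUnderKerCoker D) (h0 : (0 : A) ∈ D) :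
    ∀ (t m n : ℕ) {M N : A} (f : M ⟶ N), 3 ^ max m n + m + n ≤ t →
      M ∈ extIter D m → N ∈ extIter D n →
      kernel f ∈ extIter D (max m n) ∧ cokernel f ∈ extIter D (max m n) := by
  intro t
  induction t with
  | zero =>
    intro m n M N f ht _ _
    exfalso
    have : 0 < 3 ^ max m n := Nat.pow_pos (by norm_num)
    omega
  | succ t iht =>
    intro m n M N f ht hM hN
    constructor
    · -- kernel part
      cases n with
      | zero =>
        cases m with
        | zero =>
          rw [show max 0 0 = 0 by omega]
          exact hD.kernel_mem f hM hN
        | succ m₀ =>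
          obtain ⟨M₁, M₃, i, p, w, hse, h1, h3⟩ := hM
          obtain ⟨v, -, σ, τ, wst, hst⟩ := source_red hse f
          have c1 := iht m₀ 0 (i ≫ f) (meas_le (by omega) (by omega) ht) h1 hN
          have c2 := iht m₀ (max m₀ 0) v (meas_le (by omega) (by omega) ht) h3 c1.2
          have e1 : kernel (i ≫ f) ∈ extIter D m₀ := by
            rw [show max m₀ 0 = m₀ by omega] at c1; exact c1.1
          have e2 : kernel v ∈ extIter D m₀ := by
            rw [show max m₀ (max m₀ 0) = m₀ by omega] at c2; exact c2.1
          have hk : kernel f ∈ extIter D (m₀ + 1) :=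
            ⟨kernel (i ≫ f), kernel v, σ, τ, wst, hst, e1, e2⟩
          rw [show max (m₀ + 1) 0 = m₀ + 1 by omega]
          exact hk
      | succ n₀ =>
        obtain ⟨N₁, N₃, i, p, w, hse, h1, h3⟩ := hN
        obtain ⟨u, ⟨e⟩, -⟩ := target_red hse f
        have c1 := iht m n₀ (f ≫ p) (meas_le (by omega) (by omega) ht) hM h3
        have c2 := iht (max m n₀) n₀ u (meas_le (by omega) (by omega) ht) c1.1 h1
        have e2 : kernel u ∈ extIter D (max m n₀) := by
          rw [show max (max m n₀) n₀ = max m n₀ by omega] at c2; exact c2.1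
        have e3 : kernel f ∈ extIter D (max m n₀) :=
          extIter_isoClosed (fun e' h => hD.mem_of_iso e' h) _ e.symm e2
        exact extIter_mono h0 (by omega) e3
    · -- cokernel part
      cases m with
      | zero =>
        cases n with
        | zero =>
          rw [show max 0 0 = 0 by omega]
          exact hD.cokernel_mem f hM hN
        | succ n₀ =>
          obtain ⟨N₁, N₃, i, p, w, hse, h1, h3⟩ := hN
          obtain ⟨u, -, α, β, wab, hab⟩ := target_red hse f
          have c1 := iht 0 n₀ (f ≫ p) (meas_le (by omega) (by omega) ht) hM h3
          have c2 := iht (max 0 n₀) n₀ u (meas_le (by omega) (by omega) ht) c1.1 h1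
          have e1 : cokernel (f ≫ p) ∈ extIter D n₀ := by
            rw [show max 0 n₀ = n₀ by omega] at c1; exact c1.2
          have e2 : cokernel u ∈ extIter D n₀ := by
            rw [show max (max 0 n₀) n₀ = n₀ by omega] at c2; exact c2.2
          have hk : cokernel f ∈ extIter D (n₀ + 1) :=
            ⟨cokernel u, cokernel (f ≫ p), α, β, wab, hab, e2, e1⟩
          rw [show max 0 (n₀ + 1) = n₀ + 1 by omega]
          exact hk
      | succ m₀ =>
        obtain ⟨M₁, M₃, i, p, w, hse, h1, h3⟩ := hM
        obtain ⟨v, ⟨e⟩, -⟩ := source_red hse f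
        have c1 := iht m₀ n (i ≫ f) (meas_le (by omega) (by omega) ht) h1 hN
        have c2 := iht m₀ (max m₀ n) v (meas_le (by omega) (by omega) ht) h3 c1.2
        have e2 : cokernel v ∈ extIter D (max m₀ n) := by
          rw [show max m₀ (max m₀ n) = max m₀ n by omega] at c2; exact c2.2
        have e3 : cokernel f ∈ extIter D (max m₀ n) :=
          extIter_isoClosed (fun e' h => hD.mem_of_iso e' h) _ e.symm e2
        exact extIter_mono h0 (by omega) e3

end MainInduction

section Final
open ZeroObject

/-- Corollary 4.4: if `D` is a full subcategory of an abelian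
category closed under kernels and cokernels, then `E = ⋃ₙ Dₙ`, the increasing union of
the iterated extension subcategories, is the wide subcategory generated by `D`: it is a
wide subcategory, and it is contained in every wide subcategory containing `D`. -/
theorem union_extIter_is_wideClosure {A : Type u} [Category.{v} A] [Abelian A]
    (D : Set A) (hD : ClosedUnderKerCoker D) :
    IsWideSubcategory (⋃ n : ℕ, extIter D n) ∧
    ∀ C : Set A, IsWideSubcategory C → D ⊆ C → (⋃ n : ℕ, extIter D n) ⊆ C := by
  constructor
  · rcases Set.eq_empty_or_nonempty D with hDe | ⟨X₀, hX₀⟩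
    · have hempty : ∀ n, extIter D n = ∅ := by
        intro n
        induction n with
        | zero => exact hDe
        | succ n ih =>
          ext Z
          simp only [Set.mem_empty_iff_false, iff_false]
          rintro ⟨N', N'', i, p, w, hse, h1, h2⟩
          rw [ih] at h1
          exact h1
      have hU : (⋃ n : ℕ, extIter D n) = ∅ := by simp [hempty]
      rw [hU]
      exact ⟨fun _ h => absurd h (Set.notMem_empty _),
        fun f hX _ => absurd hX (Set.notMem_empty _),
        fun f hX _ => absurd hX (Set.notMem_empty _),
        fun S _ hX _ => absurd hX (Set.notMem_empty _)⟩
    · have h0 : (0 : A) ∈ D :=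
        hD.mem_of_iso (kernel.ofMono (𝟙 X₀)) (hD.kernel_mem (𝟙 X₀) hX₀ hX₀)
      refine ⟨?_, ?_, ?_, ?_⟩
      · intro X Y e hX
        obtain ⟨n, hn⟩ := Set.mem_iUnion.mp hX
        exact Set.mem_iUnion.mpr
          ⟨n, extIter_isoClosed (fun e' h => hD.mem_of_iso e' h) n e hn⟩
      · intro X Y f hX hY
        obtain ⟨m, hm⟩ := Set.mem_iUnion.mp hX
        obtain ⟨n, hn⟩ := Set.mem_iUnion.mp hY
        exact Set.mem_iUnion.mpr ⟨max m n,
          (kerCoker_mem hD h0 (3 ^ max m n + m + n) m n f le_rfl hm hn).1⟩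
      · intro X Y f hX hY
        obtain ⟨m, hm⟩ := Set.mem_iUnion.mp hX
        obtain ⟨n, hn⟩ := Set.mem_iUnion.mp hY
        exact Set.mem_iUnion.mpr ⟨max m n,
          (kerCoker_mem hD h0 (3 ^ max m n + m + n) m n f le_rfl hm hn).2⟩
      · intro S hse h1 h3
        obtain ⟨m, hm⟩ := Set.mem_iUnion.mp h1
        obtain ⟨n, hn⟩ := Set.mem_iUnion.mp h3
        refine Set.mem_iUnion.mpr ⟨max m n + 1, ?_⟩
        exact ⟨S.X₁, S.X₃, S.f, S.g, S.zero, hse,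
          extIter_mono h0 (le_max_left m n) hm, extIter_mono h0 (le_max_right m n) hn⟩
  · intro C hC hDC X hX
    obtain ⟨n, hn⟩ := Set.mem_iUnion.mp hX
    have key : ∀ (k : ℕ) (Z : A), Z ∈ extIter D k → Z ∈ C := by
      intro k
      induction k with
      | zero => exact fun Z hZ => hDC hZ
      | succ k ih =>
        rintro Z ⟨N', N'', i, p, w, hse, h1, h3⟩
        exact hC.extension_mem (CategoryTheory.ShortComplex.mk i p w) hse (ih _ h1) (ih _ h3)
    exact key n X hn


end Final
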